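/- Suppose the stationary measure ℙ satisfies conditions ID, FE and KB, and let ℚ be a stationary measure with supp ℚ ⊆ supp ℙ. Let ε ∈ (0,1/2) and y ∈ supp ℚ be arbitrary, and let ĉ_N be the number of words in the upper-bound auxiliary parsing of y_1^N. Then Σ_{N=1}^∞ ℙ{x : c_N(y|x) > ĉ_N} < ∞. -/

import Mathlib

open MeasureTheory Filter Asymptotics
open scoped ENNReal Classical

noncomputable section

namespace ZM

/-- The left shift on one-sided sequences. -/
def shift {A : Type*} (x : ℕ → A) : ℕ → A := fun k => x (k + 1)

/-- The cylinder set of all sequences starting with the word `a`. -/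
def cyl {A : Type*} {n : ℕ} (a : Fin n → A) : Set (ℕ → A) := {x | ∀ i : Fin n, x i = a i}

/-- The word `x_{p+1}^{p+ℓ}` of `x` (0-based: the letters at positions `p, …, p+ℓ-1`). -/
def seg {A : Type*} (y : ℕ → A) (p ℓ : ℕ) : Fin ℓ → A := fun i => y (p + i)

/-- `w` occurs in `x` at (0-based) offset `r`. -/
def matchAt {A : Type*} (x : ℕ → A) {ℓ : ℕ} (w : Fin ℓ → A) (r : ℕ) : Prop :=
  ∀ i : Fin ℓ, x (r + i) = w i

/-- `w` appears as a substring of `x_1^N`. -/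
def appears {A : Type*} (N : ℕ) (x : ℕ → A) {ℓ : ℕ} (w : Fin ℓ → A) : Prop :=
  ∃ r, r + ℓ ≤ N ∧ matchAt x w r

/-- The waiting time `W_ℓ(w, x)`: the least (1-based) position at which `w` occurs in `x`,
`⊤` if `w` never occurs. -/
def W {A : Type*} {ℓ : ℕ} (w : Fin ℓ → A) (x : ℕ → A) : ℕ∞ :=
  sInf {r : ℕ∞ | ∃ n : ℕ, r = (n : ℕ∞) ∧ 1 ≤ n ∧ matchAt x w (n - 1)}

section ZMparsing

variable {A : Type*}

/-- Length of the Ziv–Merhav word starting at (0-based) position `p` of `y_1^N`, with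
database `x_1^N`: the longest prefix of the remaining portion of `y_1^N` appearing as a
substring of `x_1^N`, or a single letter if there is no such prefix. -/
def zmLen (N : ℕ) (x y : ℕ → A) (p : ℕ) : ℕ :=
  max 1 (sSup {ℓ | p + ℓ ≤ N ∧ appears N x (seg y p ℓ)})

/-- Starting position of the `j`-th (0-based) word of the Ziv–Merhav parsing. -/
def zmPos (N : ℕ) (x y : ℕ → A) : ℕ → ℕ
  | 0 => 0
  | j + 1 => zmPos N x y j + zmLen N x y (zmPos N x y j)

/-- `c_N(y|x)`: the number of words in the Ziv–Merhav parsing of `y_1^N` w.r.t. `x_1^N`. -/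
def cN (N : ℕ) (x y : ℕ → A) : ℕ := sInf {c | N ≤ zmPos N x y c}

/-- The Ziv–Merhav estimator `Q̂_N(y, x) = c_N(y|x) ln N / N`. -/
def ZMest (N : ℕ) (x y : ℕ → A) : ℝ := (cN N x y : ℝ) * Real.log N / N

end ZMparsing

section MeasureDefs

variable {A : Type*} [MeasurableSpace A]

/-- The measure of the cylinder of a word, as a real number. -/
def wp (μ : Measure (ℕ → A)) {n : ℕ} (a : Fin n → A) : ℝ := (μ (cyl a)).toReal

/-- `supp ℙ`: the set of sequences all of whose prefixes have positive measure. -/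
def suppSet (μ : Measure (ℕ → A)) : Set (ℕ → A) := {x | ∀ n, 0 < μ (cyl (seg x 0 n))}

/-- Condition (ID): immediate decoupling on the support, with sequence `k`. -/
def CondID (μ : Measure (ℕ → A)) (k : ℕ → ℝ) : Prop :=
  Monotone k ∧ (k =o[atTop] fun n => (n : ℝ)) ∧
    ∀ (n m : ℕ) (a : Fin n → A) (b : Fin m → A), 0 < μ (cyl a) → 0 < μ (cyl b) →
      wp μ (Fin.append a b) ≤ Real.exp (k n) * (wp μ a * wp μ b) ∧
      (0 < μ (cyl (Fin.append a b)) →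
        Real.exp (-k n) * (wp μ a * wp μ b) ≤ wp μ (Fin.append a b))

/-- Condition (FE): fast enough decay, with rate `γp < 0`. -/
def CondFE (μ : Measure (ℕ → A)) (γp : ℝ) : Prop :=
  γp < 0 ∧ ∀ᶠ n : ℕ in atTop, ∀ a : Fin n → A, 0 < μ (cyl a) → wp μ a ≤ Real.exp (γp * n)

/-- Condition (SE): slow enough decay, with rate `γm < 0`. -/
def CondSE (μ : Measure (ℕ → A)) (γm : ℝ) : Prop :=
  γm < 0 ∧ ∀ᶠ n : ℕ in atTop, ∀ a : Fin n → A, 0 < μ (cyl a) → Real.exp (γm * n) ≤ wp μ a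

/-- Condition (KB): Kontoyiannis' bound on waiting times, with sequences `k`, `τ`. -/
def CondKB (μ : Measure (ℕ → A)) (k τ : ℕ → ℝ) : Prop :=
  (k =o[atTop] fun n => (n : ℝ)) ∧ (τ =o[atTop] fun n => (n : ℝ)) ∧
    ∀ (ℓ : ℕ) (a : Fin ℓ → A) (r : ℕ),
      (μ {x | (r : ℕ∞) ≤ W a x}).toReal ≤
        Real.exp (-(Real.exp (-k ℓ) * wp μ a * (⌊((r : ℝ) - 1) / ((ℓ : ℝ) + τ ℓ)⌋ : ℝ)))

/-- Length of the next word of the auxiliary parsing of `y_1^N` starting at position `p`: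
the shortest prefix of the remaining portion of `y_1^N` with measure at most `θ`, or the
whole remaining portion if there is no such prefix. -/
def auxLen (μ : Measure (ℕ → A)) (θ : ℝ) (N : ℕ) (y : ℕ → A) (p : ℕ) : ℕ :=
  if ∃ ℓ, 1 ≤ ℓ ∧ p + ℓ ≤ N ∧ wp μ (seg y p ℓ) ≤ θ then
    sInf {ℓ | 1 ≤ ℓ ∧ p + ℓ ≤ N ∧ wp μ (seg y p ℓ) ≤ θ}
  else N - p

/-- Starting position of the `j`-th (0-based) word of the auxiliary parsing. -/
def auxPos (μ : Measure (ℕ → A)) (θ : ℝ) (N : ℕ) (y : ℕ → A) : ℕ → ℕ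
  | 0 => 0
  | j + 1 => auxPos μ θ N y j + max 1 (auxLen μ θ N y (auxPos μ θ N y j))

/-- Length of the `j`-th (0-based) word of the auxiliary parsing. -/
def auxWordLen (μ : Measure (ℕ → A)) (θ : ℝ) (N : ℕ) (y : ℕ → A) (j : ℕ) : ℕ :=
  max 1 (auxLen μ θ N y (auxPos μ θ N y j))

/-- The number of words in the auxiliary parsing of `y_1^N`. -/
def auxCount (μ : Measure (ℕ → A)) (θ : ℝ) (N : ℕ) (y : ℕ → A) : ℕ :=
  sInf {c | N ≤ auxPos μ θ N y c}

/-- Length of the next word of the block parsing within a block ending at position `e`: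
the shortest prefix of the remaining portion of the block with measure at most `θ`;
`0` encodes that no such prefix exists (the rest of the block is the buffer). -/
def blkLen (μ : Measure (ℕ → A)) (θ : ℝ) (e : ℕ) (y : ℕ → A) (p : ℕ) : ℕ :=
  sInf {ℓ | 1 ≤ ℓ ∧ p + ℓ ≤ e ∧ wp μ (seg y p ℓ) ≤ θ}

/-- Starting position of the `i`-th (0-based) word of the block starting at `q`, ending at `e`. -/
def blkPos (μ : Measure (ℕ → A)) (θ : ℝ) (e : ℕ) (y : ℕ → A) (q : ℕ) : ℕ → ℕ
  | 0 => q
  | i + 1 => blkPos μ θ e y q i + blkLen μ θ e y (blkPos μ θ e y q i)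

/-- Number `d_s` of words in the block starting at `q` and ending at `e`. -/
def dCount (μ : Measure (ℕ → A)) (θ : ℝ) (e : ℕ) (y : ℕ → A) (q : ℕ) : ℕ :=
  sInf {i | blkLen μ θ e y (blkPos μ θ e y q i) = 0}

/-- The block starting at `q` and ending at `e` is good: its parsed words are pairwise
distinct. -/
def GoodBlock (μ : Measure (ℕ → A)) (θ : ℝ) (e : ℕ) (y : ℕ → A) (q : ℕ) : Prop :=
  ∀ i j : ℕ, i < dCount μ θ e y q → j < dCount μ θ e y q →
    blkLen μ θ e y (blkPos μ θ e y q i) = blkLen μ θ e y (blkPos μ θ e y q j) →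
    (∀ t < blkLen μ θ e y (blkPos μ θ e y q i),
      y (blkPos μ θ e y q i + t) = y (blkPos μ θ e y q j + t)) →
    i = j

end MeasureDefs

/-- The block length `⌊N^α⌋`. -/
def blockB (N : ℕ) (α : ℝ) : ℕ := ⌊(N : ℝ) ^ α⌋₊

/-- The number `M_N` of blocks. -/
def blockM (N : ℕ) (α : ℝ) : ℕ := (N + blockB N α - 1) / blockB N α

/-- The starting position of the `s`-th (0-based) block. -/
def blockStart (N : ℕ) (α : ℝ) (s : ℕ) : ℕ := s * blockB N α

/-- The end position of the `s`-th (0-based) block. -/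
def blockEnd (N : ℕ) (α : ℝ) (s : ℕ) : ℕ := min ((s + 1) * blockB N α) N

/-- `S_b(y_1^N)`: the set of bad blocks of the block auxiliary parsing (with threshold
`N^{-1-ε}`, word probabilities computed with `μ`). -/
def badSet {A : Type*} [MeasurableSpace A] (μ : Measure (ℕ → A)) (N : ℕ) (α ε : ℝ)
    (y : ℕ → A) : Set ℕ :=
  {s | s < blockM N α ∧
    ¬ GoodBlock μ ((N : ℝ) ^ (-1 - ε)) (blockEnd N α s) y (blockStart N α s)}

/-- `ℓ₋ = ln N / (-2 γ₋)`. -/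
def ellMinus (N : ℕ) (γm : ℝ) : ℝ := Real.log N / (-2 * γm)

/-- `ℓ₊ = 2 ln N / (-γ₊)`. -/
def ellPlus (N : ℕ) (γp : ℝ) : ℝ := 2 * Real.log N / (-γp)

/-- `d₊ = 2 N^α / ℓ₋`. -/
def dPlus (N : ℕ) (α γm : ℝ) : ℝ := 2 * (N : ℝ) ^ α / ellMinus N γm

section CrossEntropy

variable {A : Type*} [MeasurableSpace A] [Fintype A]

/-- The `n`-th cross-entropy average `-(1/n) ∑_{a ∈ 𝒜ⁿ} ℚ[a] ln ℙ[a]`, real-valued version. -/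
def hcSeq (μP μQ : Measure (ℕ → A)) (n : ℕ) : ℝ :=
  -(1 / (n : ℝ)) * ∑ a : Fin n → A, wp μQ a * Real.log (wp μP a)

/-- `-ln p` as an element of `[0, ∞]`, for `p ∈ [0, 1]`; equals `⊤` when `p = 0`. -/
def negLog (p : ℝ≥0∞) : ℝ≥0∞ := if p = 0 then ⊤ else ENNReal.ofReal (-Real.log p.toReal)

/-- The `n`-th cross-entropy average, `[0, ∞]`-valued version. -/
def hcSeqE (μP μQ : Measure (ℕ → A)) (n : ℕ) : ℝ≥0∞ :=
  (∑ a : Fin n → A, μQ (cyl a) * negLog (μP (cyl a))) / (n : ℝ≥0∞)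

end CrossEntropy

end ZM

namespace ZM

/-! If every word of the auxiliary parsing of `y_1^N` occurs in `x_1^N`, the greedy Ziv–Merhav
parsing never falls behind it, so `c_N(y|x) ≤ ĉ_N`. By immediate decoupling an auxiliary word has
measure at least `N^{-1+ε}` up to a factor `N^{-o(1)}`, and by fast decay its length is
`O(log N)`; the waiting-time bound (KB) then makes it miss `x_1^N` with probability at most
`exp(-N^{ε/2})`. A union bound over the at most `N` words leaves `N exp(-N^{ε/2})`, which is
summable. -/

section Combinatorics

variable {A : Type*}

lemma shift_iterate_apply (p : ℕ) (x : ℕ → A) (k : ℕ) : shift^[p] x k = x (k + p) := by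
  induction p generalizing x with
  | zero => rfl
  | succ n ih => rw [Function.iterate_succ_apply, ih]; rfl

lemma seg_append (y : ℕ → A) (p n m : ℕ) :
    Fin.append (seg y p n) (seg y (p + n) m) = seg y p (n + m) := by
  ext i
  refine Fin.addCases (fun i => ?_) (fun i => ?_) i
  · simp [seg]
  · simp [seg, add_assoc]

lemma appears_seg_of_le {N : ℕ} {x y : ℕ → A} {q L p ℓ : ℕ} (h : appears N x (seg y q L))
    (hqp : q ≤ p) (hle : p + ℓ ≤ q + L) : appears N x (seg y p ℓ) := by
  obtain ⟨r, hr, hm⟩ := h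
  refine ⟨r + (p - q), by omega, fun i => ?_⟩
  have := hm ⟨p - q + i, by omega⟩
  simp only [seg] at this ⊢
  rw [add_assoc, this]
  congr 1
  omega

lemma not_appears_le_W {N ℓ : ℕ} {x : ℕ → A} {w : Fin ℓ → A} (hℓ : ℓ ≤ N)
    (h : ¬ appears N x w) : ((N - ℓ + 2 : ℕ) : ℕ∞) ≤ W w x := by
  refine le_sInf ?_
  rintro _ ⟨n, rfl, hn, hm⟩
  have : ¬ n - 1 + ℓ ≤ N := fun hle => h ⟨n - 1, hle, hm⟩
  exact_mod_cast (show N - ℓ + 2 ≤ n by omega)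

section Parsing

variable [MeasurableSpace A] (μ : Measure (ℕ → A)) (θ : ℝ) (N : ℕ) (y : ℕ → A)

lemma auxLen_spec {p : ℕ} (hp : p < N) :
    1 ≤ auxLen μ θ N y p ∧ p + auxLen μ θ N y p ≤ N ∧
      ∀ ℓ, 1 ≤ ℓ → ℓ < auxLen μ θ N y p → θ < wp μ (seg y p ℓ) := by
  unfold auxLen
  split_ifs with hex
  · set S := {ℓ | 1 ≤ ℓ ∧ p + ℓ ≤ N ∧ wp μ (seg y p ℓ) ≤ θ}
    obtain ⟨h1, h2, -⟩ : sInf S ∈ S := Nat.sInf_mem hex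
    refine ⟨h1, h2, fun ℓ hℓ hlt => ?_⟩
    by_contra! hwp
    exact Nat.notMem_of_lt_sInf hlt ⟨hℓ, by omega, hwp⟩
  · push Not at hex
    exact ⟨by omega, by omega, fun ℓ hℓ hlt => hex ℓ hℓ (by omega)⟩

lemma auxPos_succ (j : ℕ) :
    auxPos μ θ N y (j + 1) = auxPos μ θ N y j + auxWordLen μ θ N y j := rfl

lemma le_auxPos (j : ℕ) : j ≤ auxPos μ θ N y j := by
  induction j with
  | zero => exact le_rfl
  | succ j ih => rw [auxPos_succ]; unfold auxWordLen; omega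

lemma auxPos_lt_of_lt_auxCount {j : ℕ} (hj : j < auxCount μ θ N y) : auxPos μ θ N y j < N := by
  by_contra! h
  exact Nat.notMem_of_lt_sInf hj h

lemma auxCount_le : auxCount μ θ N y ≤ N := Nat.sInf_le (le_auxPos μ θ N y N)

lemma le_auxPos_auxCount : N ≤ auxPos μ θ N y (auxCount μ θ N y) :=
  Nat.sInf_mem (s := {c | N ≤ auxPos μ θ N y c}) ⟨N, le_auxPos μ θ N y N⟩

lemma auxWordLen_eq {j : ℕ} (hj : auxPos μ θ N y j < N) :
    auxWordLen μ θ N y j = auxLen μ θ N y (auxPos μ θ N y j) :=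
  max_eq_right (auxLen_spec μ θ N y hj).1

lemma auxPos_add_auxWordLen_le {j : ℕ} (hj : auxPos μ θ N y j < N) :
    auxPos μ θ N y j + auxWordLen μ θ N y j ≤ N := by
  rw [auxWordLen_eq μ θ N y hj]; exact (auxLen_spec μ θ N y hj).2.1

lemma lt_wp_auxWord_init {j : ℕ} (hj : auxPos μ θ N y j < N) (hL : 2 ≤ auxWordLen μ θ N y j) :
    θ < wp μ (seg y (auxPos μ θ N y j) (auxWordLen μ θ N y j - 1)) := by
  rw [auxWordLen_eq μ θ N y hj] at hL ⊢
  exact (auxLen_spec μ θ N y hj).2.2 _ (by omega) (by omega)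

/-- A Ziv–Merhav word starting inside an auxiliary word that occurs in `x_1^N` reaches at least
to the end of that auxiliary word, so the Ziv–Merhav parsing never falls behind. -/
lemma cN_le_auxCount (x : ℕ → A)
    (happ : ∀ j < auxCount μ θ N y,
      appears N x (seg y (auxPos μ θ N y j) (auxWordLen μ θ N y j))) :
    cN N x y ≤ auxCount μ θ N y := by
  have key : ∀ j ≤ auxCount μ θ N y, auxPos μ θ N y j ≤ zmPos N x y j := by
    intro j
    induction j with
    | zero => exact fun _ => le_rfl
    | succ j ih =>
      intro hj
      set q := auxPos μ θ N y j
      set p := zmPos N x y j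
      have hqp : q ≤ p := ih (by omega)
      have hqN : q < N := auxPos_lt_of_lt_auxCount μ θ N y hj
      have hend := auxPos_add_auxWordLen_le μ θ N y hqN
      have hzm : zmPos N x y (j + 1) = p + zmLen N x y p := rfl
      rw [auxPos_succ, hzm]
      by_cases hshort : q + auxWordLen μ θ N y j ≤ p + 1
      · have : 1 ≤ zmLen N x y p := le_max_left _ _
        omega
      · have hsub : appears N x (seg y p (q + auxWordLen μ θ N y j - p)) :=
          appears_seg_of_le (happ j hj) hqp (by omega)
        have hbdd : BddAbove {ℓ | p + ℓ ≤ N ∧ appears N x (seg y p ℓ)} :=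
          ⟨N, fun ℓ hℓ => by have := hℓ.1; omega⟩
        have := (le_csSup hbdd ⟨by omega, hsub⟩).trans (le_max_right 1 _)
        unfold zmLen
        omega
  exact Nat.sInf_le ((le_auxPos_auxCount μ θ N y).trans (key _ le_rfl))

end Parsing

end Combinatorics

section Measure

variable {A : Type*} [MeasurableSpace A] {μ : Measure (ℕ → A)}

lemma measure_cyl_seg_pos (hstat : MeasurePreserving shift μ μ) {y : ℕ → A}
    (hy : y ∈ suppSet μ) (p ℓ : ℕ) : 0 < μ (cyl (seg y p ℓ)) := by
  have hsub : cyl (seg y 0 (p + ℓ)) ⊆ shift^[p] ⁻¹' cyl (seg y p ℓ) := by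
    intro x hx i
    have := hx ⟨i + p, by omega⟩
    simp only [seg, zero_add] at this
    simpa only [seg, shift_iterate_apply, add_comm] using this
  calc 0 < μ (cyl (seg y 0 (p + ℓ))) := hy (p + ℓ)
    _ ≤ μ (shift^[p] ⁻¹' cyl (seg y p ℓ)) := measure_mono hsub
    -- `le_map_apply` needs no measurability of cylinders: `A` carries an arbitrary σ-algebra.
    _ ≤ μ.map shift^[p] (cyl (seg y p ℓ)) :=
      Measure.le_map_apply (hstat.iterate p).measurable.aemeasurable _
    _ = μ (cyl (seg y p ℓ)) := by rw [(hstat.iterate p).map_eq]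

lemma exists_pos_le_wp_seg [Finite A] [IsFiniteMeasure μ] {y : ℕ → A} {m : ℕ}
    (hpos : ∀ p, 0 < μ (cyl (seg y p m))) : ∃ ρ > 0, ∀ p, ρ ≤ wp μ (seg y p m) := by
  obtain ⟨_, ⟨p₀, rfl⟩, hmin⟩ := Set.exists_min_image (Set.range (seg y · m)) (wp μ)
    (Set.toFinite _) ⟨_, 0, rfl⟩
  exact ⟨_, ENNReal.toReal_pos (hpos p₀).ne' (measure_ne_top _ _),
    fun p => hmin _ ⟨p, rfl⟩⟩

lemma CondID.wp_seg_succ_ge {k : ℕ → ℝ} (hID : CondID μ k) {y : ℕ → A}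
    (hpos : ∀ p ℓ, 0 < μ (cyl (seg y p ℓ))) (q n : ℕ) :
    Real.exp (-k n) * (wp μ (seg y q n) * wp μ (seg y (q + n) 1)) ≤ wp μ (seg y q (n + 1)) := by
  have := (hID.2.2 n 1 _ _ (hpos q n) (hpos (q + n) 1)).2
  rw [seg_append] at this
  exact this (hpos q (n + 1))

/-- An auxiliary word is its initial segment, of measure above the threshold, followed by one
letter; immediate decoupling bounds its measure from below accordingly. -/
lemma CondID.le_wp_auxWord {k : ℕ → ℝ} (hID : CondID μ k) {θ : ℝ} {N : ℕ} {y : ℕ → A}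
    (hpos : ∀ p ℓ, 0 < μ (cyl (seg y p ℓ))) {c : ℝ} (hc : ∀ p, c ≤ wp μ (seg y p 1))
    (hc₀ : 0 ≤ c) {j : ℕ} (hj : auxPos μ θ N y j < N) (hL : 2 ≤ auxWordLen μ θ N y j) :
    Real.exp (-k (auxWordLen μ θ N y j - 1)) * (θ * c) ≤
      wp μ (seg y (auxPos μ θ N y j) (auxWordLen μ θ N y j)) := by
  set q := auxPos μ θ N y j
  obtain ⟨n, hn⟩ : ∃ n, auxWordLen μ θ N y j = n + 1 := ⟨_, (Nat.sub_add_cancel (by omega)).symm⟩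
  have hinit := lt_wp_auxWord_init μ θ N y hj hL
  rw [hn, Nat.add_sub_cancel] at hinit ⊢
  refine le_trans ?_ (hID.wp_seg_succ_ge hpos q n)
  exact mul_le_mul_of_nonneg_left (mul_le_mul hinit.le (hc _) hc₀ ENNReal.toReal_nonneg)
    (Real.exp_pos _).le

lemma length_lt_of_exp_neg_lt_wp {n₀ : ℕ} {γ : ℝ} (hγ : γ < 0)
    (hFE : ∀ n ≥ n₀, ∀ a : Fin n → A, 0 < μ (cyl a) → wp μ a ≤ Real.exp (γ * n))
    {t : ℝ} (ht : 0 ≤ t) {n : ℕ} {a : Fin n → A} (ha : 0 < μ (cyl a))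
    (h : Real.exp (-t) < wp μ a) : (n : ℝ) < n₀ + t / -γ := by
  have htγ : 0 ≤ t / -γ := div_nonneg ht (by linarith)
  rcases lt_or_ge n n₀ with hn | hn
  · have : (n : ℝ) < n₀ := by exact_mod_cast hn
    linarith
  · have := Real.exp_lt_exp.mp (h.trans_le (hFE n hn a ha))
    have : (n : ℝ) < t / -γ := by rw [lt_div_iff₀ (by linarith)]; linarith
    have : (0 : ℝ) ≤ n₀ := n₀.cast_nonneg
    linarith

lemma auxWordLen_le_add_log {n₀ : ℕ} {γ : ℝ} (hγ : γ < 0)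
    (hFE : ∀ n ≥ n₀, ∀ a : Fin n → A, 0 < μ (cyl a) → wp μ a ≤ Real.exp (γ * n))
    {y : ℕ → A} (hpos : ∀ p ℓ, 0 < μ (cyl (seg y p ℓ))) {θ : ℝ} {N : ℕ} (hN : 1 ≤ N)
    (hθ : (N : ℝ)⁻¹ ≤ θ) {j : ℕ} (hj : auxPos μ θ N y j < N) :
    (auxWordLen μ θ N y j : ℝ) ≤ n₀ + 1 + Real.log N / -γ := by
  have hlog : 0 ≤ Real.log N := Real.log_nonneg (by exact_mod_cast hN)
  have : 0 ≤ Real.log N / -γ := div_nonneg hlog (by linarith)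
  have : (0 : ℝ) ≤ n₀ := n₀.cast_nonneg
  rcases lt_or_ge (auxWordLen μ θ N y j) 2 with hL | hL
  · have : (auxWordLen μ θ N y j : ℝ) ≤ 1 := by exact_mod_cast (show _ ≤ 1 by omega)
    linarith
  · have hinit : Real.exp (-Real.log N) <
        wp μ (seg y (auxPos μ θ N y j) (auxWordLen μ θ N y j - 1)) := by
      rw [Real.exp_neg, Real.exp_log (by exact_mod_cast hN)]
      exact hθ.trans_lt (lt_wp_auxWord_init μ θ N y hj hL)
    have := length_lt_of_exp_neg_lt_wp hγ hFE hlog (hpos _ _) hinit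
    rw [Nat.cast_sub (by omega), Nat.cast_one] at this
    linarith

lemma CondID.le_wp_seg_max_auxWordLen {k : ℕ → ℝ} (hID : CondID μ k) {θ : ℝ} {N : ℕ}
    {y : ℕ → A} (hpos : ∀ p ℓ, 0 < μ (cyl (seg y p ℓ))) {m : ℕ} (hm : 2 ≤ m) {c₀ : ℝ}
    (hc₀ : 0 ≤ c₀) (hc₀1 : ∀ p, c₀ ≤ wp μ (seg y p 1)) (hc₀m : ∀ p, c₀ ≤ wp μ (seg y p m))
    {c : ℝ} (hθ : 0 ≤ θ) (hcθ : c * θ ≤ 1) {j : ℕ} (hj : auxPos μ θ N y j < N)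
    (hk : c ≤ Real.exp (-k (auxWordLen μ θ N y j - 1))) :
    c * θ * c₀ ≤ wp μ (seg y (auxPos μ θ N y j) (max (auxWordLen μ θ N y j) m)) := by
  rcases le_or_gt m (auxWordLen μ θ N y j) with hmL | hLm
  · rw [max_eq_left hmL, mul_assoc]
    exact (mul_le_mul_of_nonneg_right hk (by positivity)).trans
      (hID.le_wp_auxWord hpos hc₀1 hc₀ hj (hm.trans hmL))
  · rw [max_eq_right hLm.le]
    exact (mul_le_of_le_one_left hc₀ hcθ).trans (hc₀m _)

lemma max_auxWordLen_le_and_le_wp {kP : ℕ → ℝ} (hID : CondID μ kP) {n₀ : ℕ} {γ : ℝ}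
    (hγ : γ < 0) (hFE : ∀ n ≥ n₀, ∀ a : Fin n → A, 0 < μ (cyl a) → wp μ a ≤ Real.exp (γ * n))
    {y : ℕ → A} (hpos : ∀ p ℓ, 0 < μ (cyl (seg y p ℓ))) {m : ℕ} (hm : 2 ≤ m) {c₀ : ℝ}
    (hc₀ : 0 ≤ c₀) (hc₀1 : ∀ p, c₀ ≤ wp μ (seg y p 1)) (hc₀m : ∀ p, c₀ ≤ wp μ (seg y p m))
    {N : ℕ} (hN : 1 ≤ N) {ε η : ℝ} (hε : 0 ≤ ε) (hε₁ : ε ≤ 1) (hη : 0 ≤ η) {Λ cP : ℝ}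
    (hΛ : m + n₀ + Real.log N / -γ ≤ Λ) (hcP1 : cP ≤ 1)
    (hkP : ∀ n : ℕ, (n : ℝ) ≤ Λ → cP * (N : ℝ) ^ (-η) ≤ Real.exp (-kP n)) {j : ℕ}
    (hj : auxPos μ ((N : ℝ) ^ (-1 + ε)) N y j < N) :
    ((max (auxWordLen μ ((N : ℝ) ^ (-1 + ε)) N y j) m : ℕ) : ℝ) ≤ Λ ∧
      cP * (N : ℝ) ^ (-η) * (N : ℝ) ^ (-1 + ε) * c₀ ≤
        wp μ (seg y (auxPos μ ((N : ℝ) ^ (-1 + ε)) N y j)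
          (max (auxWordLen μ ((N : ℝ) ^ (-1 + ε)) N y j) m)) := by
  set θ := (N : ℝ) ^ (-1 + ε)
  set L := auxWordLen μ θ N y j
  have hN1 : (1 : ℝ) ≤ N := by exact_mod_cast hN
  have hθN : (N : ℝ)⁻¹ ≤ θ := by
    rw [← Real.rpow_neg_one]; exact Real.rpow_le_rpow_of_exponent_le hN1 (by linarith)
  have hLΛ : ((max L m : ℕ) : ℝ) ≤ Λ := by
    have := auxWordLen_le_add_log hγ hFE hpos hN hθN hj
    have := div_nonneg (Real.log_nonneg hN1) (neg_nonneg.2 hγ.le)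
    have : (0 : ℝ) ≤ n₀ := n₀.cast_nonneg
    have : (2 : ℝ) ≤ m := by exact_mod_cast hm
    rw [Nat.cast_max]
    exact max_le (by linarith) (by linarith)
  refine ⟨hLΛ, hID.le_wp_seg_max_auxWordLen hpos hm hc₀ hc₀1 hc₀m (by positivity) ?_ hj
    (hkP _ (le_trans (by exact_mod_cast (L.sub_le 1).trans (le_max_left L m)) hLΛ))⟩
  exact mul_le_one₀ (mul_le_one₀ hcP1 (by positivity)
    (Real.rpow_le_one_of_one_le_of_nonpos hN1 (by linarith))) (by positivity)
    (Real.rpow_le_one_of_one_le_of_nonpos hN1 (by linarith))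

lemma CondKB.measure_not_appears_le {k τ : ℕ → ℝ} (hKB : CondKB μ k τ) [IsFiniteMeasure μ]
    {N ℓ : ℕ} (hℓ : ℓ ≤ N) (w : Fin ℓ → A) :
    μ {x | ¬ appears N x w} ≤ ENNReal.ofReal (Real.exp (-(Real.exp (-k ℓ) * wp μ w *
      ⌊((N : ℝ) - ℓ + 1) / (ℓ + τ ℓ)⌋))) := by
  have hsub : {x | ¬ appears N x w} ⊆ {x | ((N - ℓ + 2 : ℕ) : ℕ∞) ≤ W w x} :=
    fun x => not_appears_le_W hℓ
  refine (measure_mono hsub).trans ?_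
  rw [ENNReal.le_ofReal_iff_toReal_le (measure_ne_top _ _) (Real.exp_nonneg _)]
  convert hKB.2.2 ℓ w (N - ℓ + 2) using 6
  push_cast [hℓ]
  ring

/-- Under these constraints the number of trials `⌊(N - ℓ + 1) / (ℓ + τ ℓ)⌋` in (KB) is at least
`N / (4 Λ)`. -/
lemma CondKB.measure_not_appears_le_exp_neg {k τ : ℕ → ℝ} (hKB : CondKB μ k τ)
    [IsFiniteMeasure μ] {N ℓ : ℕ} (w : Fin ℓ → A) {Λ t : ℝ} (hℓ : 1 ≤ ℓ) (hℓΛ : (ℓ : ℝ) ≤ Λ)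
    (hΛN : 6 * Λ ≤ N) (hτ : |τ ℓ| ≤ ℓ / 2)
    (ht : t ≤ Real.exp (-k ℓ) * wp μ w * (N / (4 * Λ))) :
    μ {x | ¬ appears N x w} ≤ ENNReal.ofReal (Real.exp (-t)) := by
  have hℓ1 : (1 : ℝ) ≤ ℓ := by exact_mod_cast hℓ
  have hΛ : 0 < Λ := by linarith
  have hℓN : ℓ ≤ N := by exact_mod_cast (show (ℓ : ℝ) ≤ N by linarith)
  refine (hKB.measure_not_appears_le hℓN w).trans (ENNReal.ofReal_le_ofReal ?_)
  gcongr
  refine ht.trans (mul_le_mul_of_nonneg_left ?_ (by unfold wp; positivity))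
  have hτ' := abs_le.mp hτ
  have hfrac : (N - Λ) / (2 * Λ) ≤ ((N : ℝ) - ℓ + 1) / (ℓ + τ ℓ) :=
    div_le_div₀ (by linarith) (by linarith) (by linarith) (by linarith)
  have hfloor := Int.sub_one_lt_floor (((N : ℝ) - ℓ + 1) / (ℓ + τ ℓ))
  have hsplit : (N - Λ) / (2 * Λ) - 1 = N / (4 * Λ) + (N - 6 * Λ) / (4 * Λ) := by
    field_simp; ring
  have : 0 ≤ (N - 6 * Λ) / (4 * Λ) := div_nonneg (by linarith) (by linarith)
  linarith

end Measure

section Asymptotics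

open Real

lemma exists_pos_mul_rpow_neg_le_exp_neg {f : ℕ → ℝ} (hf : f =o[atTop] fun n => (n : ℝ))
    (a : ℝ) {b η : ℝ} (hb : 0 < b) (hη : 0 < η) :
    ∃ c > 0, c ≤ 1 ∧
      ∀ x : ℝ, 0 < x → ∀ n : ℕ, (n : ℝ) ≤ a + log x / b → c * x ^ (-η) ≤ exp (-f n) := by
  have hδ : 0 < η * b := mul_pos hη hb
  obtain ⟨C, hC⟩ : BddAbove (Set.range fun n => f n - η * b * n) := by
    refine IsBoundedUnder.bddAbove_range (isBoundedUnder_of_eventually_le (a := 0) ?_)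
    filter_upwards [hf.def hδ] with n hn
    rw [norm_of_nonneg (Nat.cast_nonneg n)] at hn
    linarith [le_abs_self (f n), Real.norm_eq_abs (f n)]
  refine ⟨min (exp (-(C + η * b * a))) 1, lt_min (exp_pos _) one_pos, min_le_right _ _,
    fun x hx n hn => (mul_le_mul_of_nonneg_right (min_le_left _ _) (rpow_nonneg hx.le _)).trans ?_⟩
  have hfn : f n ≤ C + η * b * n := by linarith [hC ⟨n, rfl⟩]
  have hlog : η * b * n ≤ η * b * a + η * log x := by
    calc η * b * n ≤ η * b * (a + log x / b) := by gcongr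
      _ = η * b * a + η * log x := by field_simp
  rw [rpow_def_of_pos hx, ← exp_add, exp_le_exp]
  linarith

lemma eventually_add_mul_log_le_mul_rpow (a b : ℝ) {c s : ℝ} (hc : 0 < c) (hs : 0 < s) :
    ∀ᶠ x : ℝ in atTop, a + b * log x ≤ c * x ^ s := by
  have hconst : (fun _ => a) =o[atTop] fun x : ℝ => x ^ s :=
    isLittleO_const_left.2 (Or.inr (tendsto_norm_atTop_atTop.comp (tendsto_rpow_atTop hs)))
  have hlog := (isLittleO_log_rpow_atTop hs).const_mul_left b
  filter_upwards [(hconst.add hlog).def hc, eventually_ge_atTop 0] with x hx hx0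
  rw [norm_of_nonneg (rpow_nonneg hx0 s)] at hx
  exact (le_abs_self _).trans hx

lemma summable_mul_exp_neg_rpow {s : ℝ} (hs : 0 < s) :
    Summable fun n : ℕ => (n : ℝ) * exp (-(n : ℝ) ^ s) := by
  refine (summable_one_div_nat_pow.2 one_lt_two).of_norm_bounded_eventually_nat ?_
  filter_upwards [tendsto_natCast_atTop_atTop.eventually
    (eventually_add_mul_log_le_mul_rpow 0 3 one_pos hs), eventually_ge_atTop 1] with n hn hn1
  have hn0 : (0 : ℝ) < n := by exact_mod_cast hn1
  have hexp : exp (-(n : ℝ) ^ s) ≤ ((n : ℝ) ^ 3)⁻¹ := by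
    rw [← exp_log (pow_pos hn0 3), ← exp_neg, exp_le_exp, log_pow]
    push_cast
    linarith
  rw [norm_of_nonneg (by positivity)]
  calc (n : ℝ) * exp (-(n : ℝ) ^ s) ≤ n * ((n : ℝ) ^ 3)⁻¹ := by gcongr
    _ = 1 / (n : ℝ) ^ 2 := by field_simp

/-- The two factors `x ^ (-ε / 8)` are the losses `exp (-k ℓ)` of decoupling and of the
waiting-time bound at word lengths `ℓ = O(log x)`. -/
lemma rpow_half_le_mul_mul_div {x Λ a b e w ε : ℝ} (hx : 0 < x) (hΛ : 0 < Λ) (ha : 0 ≤ a)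
    (hb : 0 ≤ b) (he : a * x ^ (-(ε / 8)) ≤ e) (hw : b * x ^ (-(ε / 8)) * x ^ (-1 + ε) ≤ w)
    (h : Λ ≤ a * b / 4 * x ^ (ε / 4)) :
    x ^ (ε / 2) ≤ e * w * (x / (4 * Λ)) := by
  have hpow : x ^ (-(ε / 8)) * (x ^ (-(ε / 8)) * x ^ (-1 + ε)) * x = x ^ (ε / 4) * x ^ (ε / 2) := by
    rw [← rpow_add hx, ← rpow_add hx, ← rpow_add_one hx.ne', ← rpow_add hx]
    ring_nf
  calc x ^ (ε / 2) = x ^ (ε / 2) * (4 * Λ) / (4 * Λ) := by field_simp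
    _ ≤ x ^ (ε / 2) * (a * b * x ^ (ε / 4)) / (4 * Λ) :=
        div_le_div_of_nonneg_right (mul_le_mul_of_nonneg_left (by linarith) (by positivity))
          (by positivity)
    _ = a * b * (x ^ (-(ε / 8)) * (x ^ (-(ε / 8)) * x ^ (-1 + ε)) * x) / (4 * Λ) := by
        rw [hpow]; ring
    _ = a * x ^ (-(ε / 8)) * (b * x ^ (-(ε / 8)) * x ^ (-1 + ε)) * (x / (4 * Λ)) := by ring
    _ ≤ e * w * (x / (4 * Λ)) := by
        have : 0 ≤ a * x ^ (-(ε / 8)) := by positivity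
        gcongr
        exact this.trans he

end Asymptotics

lemma tsum_ne_top_of_eventually_le_ofReal {f : ℕ → ℝ≥0∞} {g : ℕ → ℝ} (hg : Summable g)
    (hg0 : ∀ n, 0 ≤ g n) (hf : ∀ n, f n ≠ ⊤) (h : ∀ᶠ n in atTop, f n ≤ ENNReal.ofReal (g n)) :
    ∑' n, f n ≠ ⊤ := by
  lift f to ℕ → NNReal using hf
  rw [ENNReal.tsum_coe_ne_top_iff_summable, ← NNReal.summable_coe]
  refine hg.of_norm_bounded_eventually_nat ?_
  filter_upwards [h] with n hn
  rw [Real.norm_of_nonneg (f n).coe_nonneg]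
  exact ENNReal.toReal_le_of_le_ofReal (hg0 n) hn

section Main

variable {A : Type*} [MeasurableSpace A]

lemma measure_auxCount_lt_cN_le (ν μ : Measure (ℕ → A)) (θ : ℝ) (N : ℕ) (y : ℕ → A)
    {B : ℝ≥0∞} (h : ∀ j < auxCount μ θ N y,
      ν {x | ¬ appears N x (seg y (auxPos μ θ N y j) (auxWordLen μ θ N y j))} ≤ B) :
    ν {x | auxCount μ θ N y < cN N x y} ≤ N * B := by
  have hsub : {x | auxCount μ θ N y < cN N x y} ⊆ ⋃ j ∈ Finset.range (auxCount μ θ N y),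
      {x | ¬ appears N x (seg y (auxPos μ θ N y j) (auxWordLen μ θ N y j))} := by
    intro x hx
    by_contra hnot
    simp only [Set.mem_iUnion, Set.mem_ofPred_eq, Finset.mem_range, not_exists, not_not] at hnot
    exact (cN_le_auxCount μ θ N y x hnot).not_gt hx
  calc ν {x | auxCount μ θ N y < cN N x y}
      ≤ ∑ j ∈ Finset.range (auxCount μ θ N y),
          ν {x | ¬ appears N x (seg y (auxPos μ θ N y j) (auxWordLen μ θ N y j))} :=
        (measure_mono hsub).trans (measure_biUnion_finset_le _ _)
    _ ≤ ∑ _j ∈ Finset.range (auxCount μ θ N y), B :=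
        Finset.sum_le_sum fun j hj => h j (Finset.mem_range.1 hj)
    _ ≤ N * B := by
        rw [Finset.sum_const, Finset.card_range, nsmul_eq_mul]
        gcongr
        exact_mod_cast auxCount_le μ θ N y

/-- Words shorter than `m`, below the range where `|τ ℓ| ≤ ℓ / 2`, are first extended to
length `m`. -/
lemma eventually_measure_not_appears_auxWord_le [Finite A] {μ : Measure (ℕ → A)}
    [IsFiniteMeasure μ] {kP kKB τ : ℕ → ℝ} {γ : ℝ} (hID : CondID μ kP) (hFE : CondFE μ γ)
    (hKB : CondKB μ kKB τ) {y : ℕ → A} (hpos : ∀ p ℓ, 0 < μ (cyl (seg y p ℓ))) {ε : ℝ}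
    (hε : 0 < ε) (hε₁ : ε ≤ 1) :
    ∀ᶠ N : ℕ in atTop, ∀ j < auxCount μ ((N : ℝ) ^ (-1 + ε)) N y,
      μ {x | ¬ appears N x (seg y (auxPos μ ((N : ℝ) ^ (-1 + ε)) N y j)
        (auxWordLen μ ((N : ℝ) ^ (-1 + ε)) N y j))} ≤
      ENNReal.ofReal (Real.exp (-(N : ℝ) ^ (ε / 2))) := by
  obtain ⟨hγ, hFE⟩ := hFE
  obtain ⟨n₀, hn₀⟩ := eventually_atTop.1 hFE
  obtain ⟨m₁, hm₁⟩ := eventually_atTop.1 (hKB.2.1.def (half_pos one_pos))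
  set m := max m₁ 2
  have hm2 : 2 ≤ m := le_max_right m₁ 2
  obtain ⟨c₁, hc₁, hc₁le⟩ := exists_pos_le_wp_seg (m := 1) fun p => hpos p 1
  obtain ⟨cm, hcm, hcmle⟩ := exists_pos_le_wp_seg (m := m) fun p => hpos p m
  have hγ' : 0 < -γ := neg_pos.2 hγ
  have hη : 0 < ε / 8 := by positivity
  obtain ⟨cP, hcP, hcP1, hkP⟩ := exists_pos_mul_rpow_neg_le_exp_neg hID.2.1 (m + n₀) hγ' hη
  obtain ⟨cK, hcK, -, hkK⟩ := exists_pos_mul_rpow_neg_le_exp_neg hKB.1 (m + n₀) hγ' hη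
  set c₀ := min c₁ cm
  have hc₀ : 0 < c₀ := lt_min hc₁ hcm
  filter_upwards [eventually_ge_atTop 1, tendsto_natCast_atTop_atTop.eventually
    (eventually_add_mul_log_le_mul_rpow (m + n₀) (1 / -γ) (show 0 < 1 / 6 by norm_num) one_pos),
    tendsto_natCast_atTop_atTop.eventually (eventually_add_mul_log_le_mul_rpow (m + n₀)
      (1 / -γ) (show 0 < cK * (cP * c₀) / 4 by positivity) (show 0 < ε / 4 by positivity))]
    with N hN1 hN6 hNΛ j hj
  rw [one_div_mul_eq_div] at hN6 hNΛ
  rw [Real.rpow_one] at hN6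
  have hN0 : (0 : ℝ) < N := by exact_mod_cast hN1
  obtain ⟨hLΛ, hwp⟩ := max_auxWordLen_le_and_le_wp hID hγ hn₀ hpos hm2 hc₀.le
    (fun p => (min_le_left _ _).trans (hc₁le p)) (fun p => (min_le_right _ _).trans (hcmle p))
    hN1 hε.le hε₁ hη.le le_rfl hcP1 (hkP N hN0) (auxPos_lt_of_lt_auxCount μ _ N y hj)
  set θ := (N : ℝ) ^ (-1 + ε)
  set L := auxWordLen μ θ N y j
  have hΛ : (0 : ℝ) < m + n₀ + Real.log N / -γ :=
    lt_of_lt_of_le (Nat.cast_pos.2 (show 0 < max L m by omega)) hLΛ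
  have hτ : |τ (max L m)| ≤ (max L m : ℕ) / 2 := by
    have := hm₁ (max L m) ((le_max_left m₁ 2).trans (le_max_right _ _))
    rw [Real.norm_eq_abs, Real.norm_of_nonneg (Nat.cast_nonneg _)] at this
    linarith
  have hsub : μ {x | ¬ appears N x (seg y (auxPos μ θ N y j) L)} ≤
      μ {x | ¬ appears N x (seg y (auxPos μ θ N y j) (max L m))} :=
    measure_mono fun x hx happ =>
      hx (appears_seg_of_le happ le_rfl (Nat.add_le_add_left (le_max_left _ _) _))
  refine hsub.trans (hKB.measure_not_appears_le_exp_neg _ (by omega) hLΛ (by linarith) hτ ?_)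
  exact rpow_half_le_mul_mul_div hN0 hΛ hcK.le (by positivity) (hkK N hN0 _ hLΛ)
    (by linarith) hNΛ

end Main

theorem cN_le_auxCount_summable_general {A : Type*} [Fintype A] [MeasurableSpace A]
    (μP μQ : Measure (ℕ → A)) [IsProbabilityMeasure μP]
    (hPstat : MeasurePreserving shift μP μP)
    (kP kKB τKB : ℕ → ℝ) (γP : ℝ)
    (hPID : CondID μP kP) (hPFE : CondFE μP γP) (hPKB : CondKB μP kKB τKB)
    (hsupp : suppSet μQ ⊆ suppSet μP)
    (ε : ℝ) (hε : 0 < ε ∧ ε < 1 / 2) (y : ℕ → A) (hy : y ∈ suppSet μQ) :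
    (∑' N : ℕ, μP {x | auxCount μP ((N : ℝ) ^ (-1 + ε)) N y < cN N x y}) ≠ ⊤ := by
  have hpos : ∀ p ℓ, 0 < μP (cyl (seg y p ℓ)) := measure_cyl_seg_pos hPstat (hsupp hy)
  refine tsum_ne_top_of_eventually_le_ofReal (summable_mul_exp_neg_rpow (half_pos hε.1))
    (fun N => by positivity) (fun N => measure_ne_top _ _) ?_
  filter_upwards [eventually_measure_not_appears_auxWord_le hPID hPFE hPKB hpos hε.1
    (by linarith [hε.2])] with N hN
  refine (measure_auxCount_lt_cN_le μP μP _ N y hN).trans_eq ?_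
  rw [ENNReal.ofReal_mul (Nat.cast_nonneg _), ENNReal.ofReal_natCast]

/-- **Summability bound (3.2).** Under (ID), (FE), (KB) for `ℙ` and `supp ℚ ⊆ supp ℙ`, for
every `y ∈ supp ℚ`, the probabilities `ℙ{x : c_N(y|x) > ĉ_N}` are summable in `N`, where
`ĉ_N` is the number of words in the upper-bound auxiliary parsing of `y_1^N`. -/
theorem cN_le_auxCount_summable {A : Type*} [Fintype A] [MeasurableSpace A]
    (μP μQ : Measure (ℕ → A)) [IsProbabilityMeasure μP] [IsProbabilityMeasure μQ]
    (hPstat : MeasurePreserving shift μP μP)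
    (hQstat : MeasurePreserving shift μQ μQ)
    (kP kKB τKB : ℕ → ℝ) (γP : ℝ)
    (hPID : CondID μP kP) (hPFE : CondFE μP γP) (hPKB : CondKB μP kKB τKB)
    (hsupp : suppSet μQ ⊆ suppSet μP)
    (ε : ℝ) (hε : 0 < ε ∧ ε < 1 / 2) (y : ℕ → A) (hy : y ∈ suppSet μQ) :
    (∑' N : ℕ, μP {x | auxCount μP ((N : ℝ) ^ (-1 + ε)) N y < cN N x y}) ≠ ⊤ :=
  cN_le_auxCount_summable_general μP μQ hPstat kP kKB τKB γP hPID hPFE hPKB hsupp ε hε y hy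

end ZM
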